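/- arXiv:2311.06789 — 3 statements merged into one kernel-verified Lean document; each statement's English description precedes it below -/
import Mathlib

section
/- Fix κ > 0, an integer p ≥ 2, and set b := (6−κ)/(2κ). The half-watermelon SLE partition function Z(x) := ∏_{1 ≤ i < j ≤ p} (x_j − x_i)^{2/κ} is smooth on X_p, and it satisfies the system of BPZ equations: for every x = (x_1, …, x_p) ∈ X_p and every j ∈ {1, …, p}, (κ/2)·∂_j² Z(x) + Σ_{ℓ ≠ j} [ (2/(x_ℓ − x_j))·∂_ℓ Z(x) − (2b/(x_ℓ − x_j)²)·Z(x) ] = 0, where ∂_j denotes the partial derivative in the j-th coordinate. -/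
open Real Finset
open MeasureTheory

private lemma three_term {a b c : ℝ} (hab : a ≠ b) (hac : a ≠ c) (hbc : b ≠ c) :
    (a-b)⁻¹ * (a-c)⁻¹ + ((b-a)⁻¹ * (b-c)⁻¹ + (c-a)⁻¹ * (c-b)⁻¹) = 0 := by
  have h1 : a - b ≠ 0 := sub_ne_zero.2 hab
  have h2 : a - c ≠ 0 := sub_ne_zero.2 hac
  have h3 : b - c ≠ 0 := sub_ne_zero.2 hbc
  have h4 : b - a ≠ 0 := sub_ne_zero.2 hab.symm
  have h5 : c - a ≠ 0 := sub_ne_zero.2 hac.symm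
  have h6 : c - b ≠ 0 := sub_ne_zero.2 hbc.symm
  field_simp
  ring

private lemma key_ident {p : ℕ} (x : Fin p → ℝ) (hx : StrictMono x) (j : Fin p) :
    (∑ ℓ ∈ univ.erase j, (x j - x ℓ)⁻¹)^2
      + 2 * ∑ ℓ ∈ univ.erase j, (x ℓ - x j)⁻¹ * ∑ m ∈ univ.erase ℓ, (x ℓ - x m)⁻¹
      = 3 * ∑ ℓ ∈ univ.erase j, (x j - x ℓ)⁻¹ * (x j - x ℓ)⁻¹ := by
  have hinj : Function.Injective x := hx.injective
  set U := (univ : Finset (Fin p)).erase j with hU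
  have hmem : ∀ ℓ : Fin p, ℓ ∈ U ↔ ℓ ≠ j := by
    intro ℓ; simp [hU]
  -- Expand the square
  have hsq : (∑ ℓ ∈ U, (x j - x ℓ)⁻¹)^2
      = ∑ ℓ ∈ U, ∑ m ∈ U, (x j - x ℓ)⁻¹ * (x j - x m)⁻¹ := by
    rw [sq, Finset.sum_mul_sum]
  -- split inner sums
  have hsplit1 : ∀ ℓ ∈ U, ∑ m ∈ U, (x j - x ℓ)⁻¹ * (x j - x m)⁻¹
      = (x j - x ℓ)⁻¹ * (x j - x ℓ)⁻¹
        + ∑ m ∈ U.erase ℓ, (x j - x ℓ)⁻¹ * (x j - x m)⁻¹ := by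
    intro ℓ hℓ
    exact (Finset.add_sum_erase U _ hℓ).symm
  have hsplit2 : ∀ ℓ ∈ U, ∑ m ∈ univ.erase ℓ, (x ℓ - x m)⁻¹
      = (x ℓ - x j)⁻¹ + ∑ m ∈ U.erase ℓ, (x ℓ - x m)⁻¹ := by
    intro ℓ hℓ
    have hj : j ∈ (univ : Finset (Fin p)).erase ℓ := by
      simp [Ne.symm ((hmem ℓ).1 hℓ)]
    rw [← Finset.add_sum_erase _ _ hj, Finset.erase_right_comm]
  -- symmetric swap
  have hswap : ∑ ℓ ∈ U, ∑ m ∈ U.erase ℓ, (x m - x j)⁻¹ * (x m - x ℓ)⁻¹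
      = ∑ ℓ ∈ U, ∑ m ∈ U.erase ℓ, (x ℓ - x j)⁻¹ * (x ℓ - x m)⁻¹ := by
    apply Finset.sum_comm' (s := U) (t := fun ℓ => U.erase ℓ) (t' := U)
      (s' := fun m => U.erase m)
    intro a c
    constructor
    · rintro ⟨ha, hc⟩
      exact ⟨Finset.mem_erase.2 ⟨(Finset.ne_of_mem_erase hc).symm, ha⟩,
        Finset.mem_of_mem_erase hc⟩
    · rintro ⟨ha, hc⟩
      exact ⟨Finset.mem_of_mem_erase ha, Finset.mem_erase.2
        ⟨(Finset.ne_of_mem_erase ha).symm, hc⟩⟩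
  -- three-term cancellation
  have hzero : ∑ ℓ ∈ U, ∑ m ∈ U.erase ℓ,
      ((x j - x ℓ)⁻¹ * (x j - x m)⁻¹
        + ((x ℓ - x j)⁻¹ * (x ℓ - x m)⁻¹ + (x m - x j)⁻¹ * (x m - x ℓ)⁻¹)) = 0 := by
    apply Finset.sum_eq_zero; intro ℓ hℓ
    apply Finset.sum_eq_zero; intro m hm
    have hℓj : ℓ ≠ j := (hmem ℓ).1 hℓ
    have hmU : m ∈ U := Finset.mem_of_mem_erase hm
    have hmj : m ≠ j := (hmem m).1 hmU
    have hmℓ : m ≠ ℓ := Finset.ne_of_mem_erase hm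
    exact three_term (fun h => hℓj.symm (hinj h)) (fun h => hmj.symm (hinj h))
      (fun h => hmℓ.symm (hinj h))
  calc (∑ ℓ ∈ U, (x j - x ℓ)⁻¹)^2
      + 2 * ∑ ℓ ∈ U, (x ℓ - x j)⁻¹ * ∑ m ∈ univ.erase ℓ, (x ℓ - x m)⁻¹
      = (∑ ℓ ∈ U, ((x j - x ℓ)⁻¹ * (x j - x ℓ)⁻¹
            + ∑ m ∈ U.erase ℓ, (x j - x ℓ)⁻¹ * (x j - x m)⁻¹))
        + 2 * ∑ ℓ ∈ U, ((x ℓ - x j)⁻¹ * (x ℓ - x j)⁻¹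
            + ∑ m ∈ U.erase ℓ, (x ℓ - x j)⁻¹ * (x ℓ - x m)⁻¹) := by
        rw [hsq]
        congr 1
        · exact Finset.sum_congr rfl hsplit1
        · congr 1
          apply Finset.sum_congr rfl
          intro ℓ hℓ
          rw [hsplit2 ℓ hℓ, mul_add, Finset.mul_sum]
    _ = 3 * ∑ ℓ ∈ U, (x j - x ℓ)⁻¹ * (x j - x ℓ)⁻¹
        + ∑ ℓ ∈ U, ∑ m ∈ U.erase ℓ,
          ((x j - x ℓ)⁻¹ * (x j - x m)⁻¹
            + ((x ℓ - x j)⁻¹ * (x ℓ - x m)⁻¹ + (x m - x j)⁻¹ * (x m - x ℓ)⁻¹)) := by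
        rw [Finset.sum_add_distrib, Finset.sum_add_distrib, mul_add]
        have hQ : ∑ ℓ ∈ U, (x ℓ - x j)⁻¹ * (x ℓ - x j)⁻¹
            = ∑ ℓ ∈ U, (x j - x ℓ)⁻¹ * (x j - x ℓ)⁻¹ := by
          apply Finset.sum_congr rfl; intro ℓ _
          rw [show x ℓ - x j = -(x j - x ℓ) by ring, inv_neg]; ring
        rw [hQ]
        have : ∑ ℓ ∈ U, ∑ m ∈ U.erase ℓ,
            ((x j - x ℓ)⁻¹ * (x j - x m)⁻¹
              + ((x ℓ - x j)⁻¹ * (x ℓ - x m)⁻¹ + (x m - x j)⁻¹ * (x m - x ℓ)⁻¹))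
            = ∑ ℓ ∈ U, ∑ m ∈ U.erase ℓ, (x j - x ℓ)⁻¹ * (x j - x m)⁻¹
              + 2 * ∑ ℓ ∈ U, ∑ m ∈ U.erase ℓ, (x ℓ - x j)⁻¹ * (x ℓ - x m)⁻¹ := by
          rw [← hswap]
          simp only [Finset.sum_add_distrib]
          rw [hswap]
          ring
        rw [this]; ring
    _ = 3 * ∑ ℓ ∈ U, (x j - x ℓ)⁻¹ * (x j - x ℓ)⁻¹ := by rw [hzero, add_zero]

private noncomputable def pairL {p : ℕ} (q : Fin p × Fin p) : (Fin p → ℝ) →L[ℝ] ℝ :=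
  (ContinuousLinearMap.proj q.2 : (Fin p → ℝ) →L[ℝ] ℝ) - ContinuousLinearMap.proj q.1

private lemma pairL_apply {p : ℕ} (q : Fin p × Fin p) (v : Fin p → ℝ) :
    pairL q v = v q.2 - v q.1 := rfl

variable {p : ℕ} (e : ℝ)

private noncomputable def SS (p : ℕ) : Finset (Fin p × Fin p) :=
  (univ ×ˢ univ).filter fun q => q.1 < q.2

private noncomputable def Zf (e : ℝ) (y : Fin p → ℝ) : ℝ :=
  ∏ q ∈ SS p, (y q.2 - y q.1) ^ e

private lemma hasF {x : Fin p → ℝ} (hx : StrictMono x) :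
    HasFDerivAt (Zf e (p := p))
      (∑ q ∈ SS p, (∏ r ∈ (SS p).erase q, (x r.2 - x r.1) ^ e) •
        ((e * (x q.2 - x q.1) ^ (e - 1)) • pairL q)) x := by
  have : ∀ q ∈ SS p, HasFDerivAt (fun y : Fin p → ℝ => (y q.2 - y q.1) ^ e)
      ((e * (x q.2 - x q.1) ^ (e - 1)) • pairL q) x := by
    intro q hq
    have hlt : q.1 < q.2 := (Finset.mem_filter.1 hq).2
    have hne : x q.2 - x q.1 ≠ 0 := sub_ne_zero.2 (hx hlt).ne'
    have hL : HasFDerivAt (fun y : Fin p → ℝ => y q.2 - y q.1) (pairL q) x :=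
      ((ContinuousLinearMap.proj q.2 : (Fin p → ℝ) →L[ℝ] ℝ).hasFDerivAt).sub
        ((ContinuousLinearMap.proj q.1 : (Fin p → ℝ) →L[ℝ] ℝ).hasFDerivAt)
    exact hL.rpow_const (Or.inl hne)
  exact HasFDerivAt.finset_prod this

private lemma sum_dir (x : Fin p → ℝ) (ℓ : Fin p) :
    ∑ q ∈ SS p, (((if q.2 = ℓ then (1:ℝ) else 0) - (if q.1 = ℓ then (1:ℝ) else 0))
        * (x q.2 - x q.1)⁻¹)
      = ∑ m ∈ univ.erase ℓ, (x ℓ - x m)⁻¹ := by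
  rw [SS, Finset.sum_filter, Finset.sum_product]
  have step : ∀ i : Fin p, ∑ j : Fin p, (if i < j then
        ((if j = ℓ then (1:ℝ) else 0) - (if i = ℓ then (1:ℝ) else 0)) * (x j - x i)⁻¹ else 0)
      = (if i < ℓ then (x ℓ - x i)⁻¹ else 0)
        - (if i = ℓ then ∑ j ∈ univ.filter fun j => ℓ < j, (x j - x ℓ)⁻¹ else 0) := by
    intro i
    have expand : ∀ j : Fin p, (if i < j then
        ((if j = ℓ then (1:ℝ) else 0) - (if i = ℓ then (1:ℝ) else 0)) * (x j - x i)⁻¹ else 0)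
        = (if j = ℓ then (if i < ℓ then (x ℓ - x i)⁻¹ else 0) else 0)
          - (if i = ℓ then (if ℓ < j then (x j - x ℓ)⁻¹ else 0) else 0) := by
      intro j
      by_cases hjℓ : j = ℓ <;> by_cases hiℓ : i = ℓ <;>
        subst_vars <;> simp_all <;> split <;> simp_all <;> ring
    simp only [expand, Finset.sum_sub_distrib]
    congr 1
    · simp
    · by_cases hiℓ : i = ℓ <;> simp [hiℓ, Finset.sum_filter]
  simp only [step, Finset.sum_sub_distrib]
  have h1 : ∑ i : Fin p, (if i < ℓ then (x ℓ - x i)⁻¹ else 0)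
      = ∑ i ∈ univ.filter fun i => i < ℓ, (x ℓ - x i)⁻¹ := by
    rw [Finset.sum_filter]
  have h2 : ∑ i : Fin p, (if i = ℓ then
        ∑ j ∈ univ.filter fun j => ℓ < j, (x j - x ℓ)⁻¹ else 0)
      = ∑ j ∈ univ.filter fun j => ℓ < j, (x j - x ℓ)⁻¹ := by
    simp
  rw [h1, h2]
  have h3 : ∑ m ∈ univ.erase ℓ, (x ℓ - x m)⁻¹
      = ∑ m : Fin p, (if m ≠ ℓ then (x ℓ - x m)⁻¹ else 0) := by
    rw [← Finset.sum_filter, Finset.filter_ne']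
  rw [h3]
  have h4 : ∀ m : Fin p, (if m ≠ ℓ then (x ℓ - x m)⁻¹ else 0)
      = (if m < ℓ then (x ℓ - x m)⁻¹ else 0) + (if ℓ < m then (x ℓ - x m)⁻¹ else 0) := by
    intro m
    rcases lt_trichotomy m ℓ with h | h | h
    · simp [h, h.ne, not_lt_of_gt h]
    · simp [h]
    · simp [h, h.ne', not_lt_of_gt h]
  simp only [h4, Finset.sum_add_distrib, Finset.sum_filter]
  have h5 : ∀ j : Fin p, (x j - x ℓ)⁻¹ = -(x ℓ - x j)⁻¹ := by
    intro j; rw [show x j - x ℓ = -(x ℓ - x j) by ring, inv_neg]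
  simp only [h5]
  have h6 : ∀ j : Fin p, (if ℓ < j then -(x ℓ - x j)⁻¹ else 0)
      = -(if ℓ < j then (x ℓ - x j)⁻¹ else 0) := by
    intro j; split <;> simp
  simp only [h6, Finset.sum_neg_distrib]
  ring

private lemma dirDeriv {x : Fin p → ℝ} (hx : StrictMono x) (ℓ : Fin p) :
    fderiv ℝ (Zf e (p := p)) x (Pi.single ℓ 1)
      = Zf e x * (e * ∑ m ∈ univ.erase ℓ, (x ℓ - x m)⁻¹) := by
  rw [(hasF e hx).fderiv]
  simp only [ContinuousLinearMap.coe_sum', Finset.sum_apply,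
    ContinuousLinearMap.coe_smul', Pi.smul_apply, pairL_apply, smul_eq_mul]
  set v : Fin p → ℝ := Pi.single ℓ 1 with hv
  have term : ∀ q ∈ SS p, (∏ r ∈ (SS p).erase q, (x r.2 - x r.1) ^ e)
        * (e * (x q.2 - x q.1) ^ (e - 1) * (v q.2 - v q.1))
      = Zf e x * (e * (((if q.2 = ℓ then (1:ℝ) else 0) - (if q.1 = ℓ then (1:ℝ) else 0))
          * (x q.2 - x q.1)⁻¹)) := by
    intro q hq
    have hlt : q.1 < q.2 := (Finset.mem_filter.1 hq).2
    have hne : x q.2 - x q.1 ≠ 0 := sub_ne_zero.2 (hx hlt).ne'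
    have hsingle : ∀ m : Fin p, v m = if m = ℓ then (1:ℝ) else 0 := by
      intro m; rw [hv, Pi.single_apply]
    rw [hsingle, hsingle, Real.rpow_sub_one hne, Zf, ← Finset.mul_prod_erase _ _ hq]
    field_simp
  rw [Finset.sum_congr rfl term, ← Finset.mul_sum, ← Finset.mul_sum, sum_dir]

private lemma open_strictMono : IsOpen {y : Fin p → ℝ | StrictMono y} := by
  have : {y : Fin p → ℝ | StrictMono y}
      = ⋂ q : Fin p × Fin p, {y : Fin p → ℝ | q.1 < q.2 → y q.1 < y q.2} := by
    ext y
    simp only [Set.mem_setOf_eq, Set.mem_iInter]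
    exact ⟨fun h q => fun hq => h hq, fun h a b hab => h (a, b) hab⟩
  rw [this]
  apply isOpen_iInter_of_finite
  intro q
  by_cases hq : q.1 < q.2
  · simp only [hq, forall_true_left]
    exact isOpen_lt (continuous_apply _) (continuous_apply _)
  · simp only [hq, false_implies]
    exact isOpen_univ

private lemma smoothZf : ContDiffOn ℝ (⊤ : ℕ∞) (Zf e (p := p)) {y : Fin p → ℝ | StrictMono y} := by
  intro x hx
  apply ContDiffAt.contDiffWithinAt
  apply contDiffAt_prod
  intro q hq
  have hlt : q.1 < q.2 := (Finset.mem_filter.1 hq).2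
  have hne : x q.2 - x q.1 ≠ 0 := sub_ne_zero.2 (hx hlt).ne'
  have hf : ContDiffAt ℝ (⊤ : ℕ∞) (fun y : Fin p → ℝ => y q.2 - y q.1) x :=
    (((ContinuousLinearMap.proj q.2 : (Fin p → ℝ) →L[ℝ] ℝ).contDiff).sub
      ((ContinuousLinearMap.proj q.1 : (Fin p → ℝ) →L[ℝ] ℝ).contDiff)).contDiffAt
  exact hf.rpow_const_of_ne hne

private lemma secondDeriv {x : Fin p → ℝ} (hx : StrictMono x) (j : Fin p) :
    fderiv ℝ (fun y => fderiv ℝ (Zf e (p := p)) y (Pi.single j 1)) x (Pi.single j 1)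
      = Zf e x * (e * ∑ m ∈ univ.erase j, (x j - x m)⁻¹)
          * (e * ∑ m ∈ univ.erase j, (x j - x m)⁻¹)
        - Zf e x * e * ∑ m ∈ univ.erase j, ((x j - x m)⁻¹ * (x j - x m)⁻¹) := by
  have heq : (fun y => fderiv ℝ (Zf e (p := p)) y (Pi.single j 1))
      =ᶠ[nhds x] (fun y => Zf e y * (e * ∑ m ∈ univ.erase j, (y j - y m)⁻¹)) := by
    filter_upwards [open_strictMono.mem_nhds hx] with y hy
    exact dirDeriv e hy j
  rw [heq.fderiv_eq]
  have hS : HasFDerivAt (fun y : Fin p → ℝ => ∑ m ∈ univ.erase j, (y j - y m)⁻¹)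
      (∑ m ∈ univ.erase j, (-((x j - x m) ^ 2)⁻¹) • pairL ((m, j) : Fin p × Fin p)) x := by
    apply HasFDerivAt.fun_sum
    intro m hm
    have hmj : m ≠ j := Finset.ne_of_mem_erase hm
    have hne : x j - x m ≠ 0 := sub_ne_zero.2 fun h => hmj (hx.injective h.symm)
    have hsub : HasFDerivAt (fun y : Fin p → ℝ => y j - y m)
        (pairL ((m, j) : Fin p × Fin p)) x :=
      ((ContinuousLinearMap.proj j : (Fin p → ℝ) →L[ℝ] ℝ).hasFDerivAt).sub
        ((ContinuousLinearMap.proj m : (Fin p → ℝ) →L[ℝ] ℝ).hasFDerivAt)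
    exact (hasDerivAt_inv hne).comp_hasFDerivAt x hsub
  have hD : HasFDerivAt
      (fun y => Zf e y * (e * ∑ m ∈ univ.erase j, (y j - y m)⁻¹))
      ((Zf e x) • (e • ∑ m ∈ univ.erase j, (-((x j - x m) ^ 2)⁻¹)
          • pairL ((m, j) : Fin p × Fin p))
        + (e * ∑ m ∈ univ.erase j, (x j - x m)⁻¹) •
          (∑ q ∈ SS p, (∏ r ∈ (SS p).erase q, (x r.2 - x r.1) ^ e) •
            ((e * (x q.2 - x q.1) ^ (e - 1)) • pairL q))) x :=
    (hasF e hx).mul (hS.const_mul e)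
  rw [hD.fderiv]
  have happF : (∑ q ∈ SS p, (∏ r ∈ (SS p).erase q, (x r.2 - x r.1) ^ e) •
        ((e * (x q.2 - x q.1) ^ (e - 1)) • pairL q)) (Pi.single j 1)
      = Zf e x * (e * ∑ m ∈ univ.erase j, (x j - x m)⁻¹) := by
    rw [← (hasF e hx).fderiv]
    exact dirDeriv e hx j
  set v : Fin p → ℝ := Pi.single j 1 with hv
  simp only [ContinuousLinearMap.add_apply, ContinuousLinearMap.smul_apply,
    smul_eq_mul, happF]
  simp only [ContinuousLinearMap.coe_sum', Finset.sum_apply,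
    ContinuousLinearMap.smul_apply, pairL_apply, smul_eq_mul]
  have hterm : ∀ m ∈ univ.erase j,
      -((x j - x m) ^ 2)⁻¹ * (v j - v m)
        = -((x j - x m)⁻¹ * (x j - x m)⁻¹) := by
    intro m hm
    have hmj : m ≠ j := Finset.ne_of_mem_erase hm
    have h1 : v j = 1 := by rw [hv, Pi.single_apply]; simp
    have h2 : v m = 0 := by rw [hv, Pi.single_apply]; simp [hmj]
    rw [h1, h2, sq, mul_inv]
    ring
  rw [Finset.sum_congr rfl hterm, Finset.sum_neg_distrib]
  ring

/-- The half-watermelon SLE partition function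
`Z(x) = ∏_{i<j} (x_j - x_i)^(2/κ)` is smooth on `X_p` and satisfies the
system of BPZ equations with `b = (6-κ)/(2κ)`. -/
theorem stmt_0 (κ : ℝ) (hκ : 0 < κ) (p : ℕ) (hp : 2 ≤ p)
    (b : ℝ) (hb : b = (6 - κ) / (2 * κ))
    (Xp : Set (Fin p → ℝ)) (hXp : Xp = {x : Fin p → ℝ | StrictMono x})
    (Z : (Fin p → ℝ) → ℝ)
    (hZ : ∀ x : Fin p → ℝ, Z x = ∏ i : Fin p, ∏ j : Fin p,
        if i < j then (x j - x i) ^ (2 / κ) else 1) :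
    ContDiffOn ℝ (⊤ : ℕ∞) Z Xp ∧
    ∀ x ∈ Xp, ∀ j : Fin p,
      κ / 2 * fderiv ℝ (fun y => fderiv ℝ Z y (Pi.single j 1)) x (Pi.single j 1)
        + ∑ ℓ ∈ univ.erase j,
            (2 / (x ℓ - x j) * fderiv ℝ Z x (Pi.single ℓ 1)
              - 2 * b / (x ℓ - x j) ^ 2 * Z x) = 0 := by
  have hZe : Z = Zf (2 / κ) := by
    funext x
    rw [hZ, Zf, SS, Finset.prod_filter, Finset.prod_product]
  subst hZe
  subst hXp
  refine ⟨smoothZf (2 / κ), ?_⟩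
  intro x hx j
  have hx' : StrictMono x := hx
  rw [secondDeriv (2 / κ) hx' j]
  have hsum : ∑ ℓ ∈ univ.erase j,
      (2 / (x ℓ - x j) * fderiv ℝ (Zf (2 / κ)) x (Pi.single ℓ 1)
        - 2 * b / (x ℓ - x j) ^ 2 * Zf (2 / κ) x)
      = Zf (2 / κ) x * (2 / κ) * 2
          * ∑ ℓ ∈ univ.erase j, (x ℓ - x j)⁻¹ * ∑ m ∈ univ.erase ℓ, (x ℓ - x m)⁻¹
        - Zf (2 / κ) x * (2 * b)
          * ∑ ℓ ∈ univ.erase j, (x j - x ℓ)⁻¹ * (x j - x ℓ)⁻¹ := by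
    have hterm : ∀ ℓ ∈ univ.erase j,
        2 / (x ℓ - x j) * fderiv ℝ (Zf (2 / κ)) x (Pi.single ℓ 1)
          - 2 * b / (x ℓ - x j) ^ 2 * Zf (2 / κ) x
        = Zf (2 / κ) x * (2 / κ) * 2
            * ((x ℓ - x j)⁻¹ * ∑ m ∈ univ.erase ℓ, (x ℓ - x m)⁻¹)
          - Zf (2 / κ) x * (2 * b) * ((x j - x ℓ)⁻¹ * (x j - x ℓ)⁻¹) := by
      intro ℓ hℓ
      have hℓj : ℓ ≠ j := Finset.ne_of_mem_erase hℓ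
      have hne : x ℓ - x j ≠ 0 := sub_ne_zero.2 fun h => hℓj (hx'.injective h)
      have hne' : x j - x ℓ ≠ 0 := sub_ne_zero.2 fun h => hℓj (hx'.injective h.symm)
      rw [dirDeriv (2 / κ) hx' ℓ]
      have hsq : (x j - x ℓ)⁻¹ * (x j - x ℓ)⁻¹ = ((x ℓ - x j) ^ 2)⁻¹ := by
        rw [show x j - x ℓ = -(x ℓ - x j) by ring, inv_neg, sq, mul_inv]
        ring
      rw [hsq]
      field_simp
    rw [Finset.sum_congr rfl hterm, Finset.sum_sub_distrib, ← Finset.mul_sum,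
      ← Finset.mul_sum]
  rw [hsum]
  have key := key_ident x hx' j
  have e1 : κ / 2 * (2 / κ) = 1 := by field_simp
  have e2 : 2 * b = 3 * (2 / κ) - 1 := by
    rw [hb]; field_simp; ring
  linear_combination
    (Zf (2 / κ) x * (2 / κ) * (∑ ℓ ∈ univ.erase j, (x j - x ℓ)⁻¹) ^ 2
      - Zf (2 / κ) x * ∑ ℓ ∈ univ.erase j, (x j - x ℓ)⁻¹ * (x j - x ℓ)⁻¹) * e1
    + (- Zf (2 / κ) x * ∑ ℓ ∈ univ.erase j, (x j - x ℓ)⁻¹ * (x j - x ℓ)⁻¹) * e2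
    + (Zf (2 / κ) x * (2 / κ)) * key
end

section
/- Fix an integer n ≥ 1. The Gaussian free field partition function Z_GFF(x) := ∏_{1 ≤ j < k ≤ 2n} (x_k − x_j)^{(−1)^{j−k}/2} is smooth on X_{2n}, and it satisfies the system of BPZ equations with κ = 4 (so b = 1/4): for every x = (x_1, …, x_{2n}) ∈ X_{2n} and every j ∈ {1, …, 2n}, 2·∂_j² Z_GFF(x) + Σ_{ℓ ≠ j} [ (2/(x_ℓ − x_j))·∂_ℓ Z_GFF(x) − ((1/2)/(x_ℓ − x_j)²)·Z_GFF(x) ] = 0. -/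
open Real MeasureTheory Finset

namespace GFFAux

variable {N : ℕ}

/-- projection as a continuous linear map -/
noncomputable def pr (i : Fin N) : (Fin N → ℝ) →L[ℝ] ℝ := ContinuousLinearMap.proj i

@[simp] lemma pr_apply (i : Fin N) (v : Fin N → ℝ) : pr i v = v i := rfl

/-- the exponents -/
noncomputable def Cc (j k : Fin N) : ℝ := (-1 : ℝ) ^ ((j : ℕ) + (k : ℕ)) / 2

lemma Cc_symm (j k : Fin N) : Cc k j = Cc j k := by
  unfold Cc; rw [Nat.add_comm]

lemma Cc_sq (j ℓ : Fin N) : Cc j ℓ * Cc j ℓ = 1 / 4 := by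
  unfold Cc
  rw [div_mul_div_comm, ← pow_add, ← two_mul, pow_mul]
  norm_num

lemma Cc_mul (j ℓ m : Fin N) : Cc j ℓ * Cc j m = Cc ℓ m / 2 := by
  unfold Cc
  rw [div_mul_div_comm, ← pow_add]
  rw [show (j : ℕ) + ℓ + ((j : ℕ) + m) = 2 * (j : ℕ) + ((ℓ : ℕ) + m) by ring,
    pow_add, pow_mul]
  norm_num
  ring

/-- the GFF partition function -/
noncomputable def Ff (x : Fin N → ℝ) : ℝ :=
  ∏ j, ∏ k, if j < k then (x k - x j) ^ (Cc j k) else 1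

/-- its logarithm -/
noncomputable def Ww (x : Fin N → ℝ) : ℝ :=
  ∑ j, ∑ k, if j < k then Cc j k * Real.log (x k - x j) else 0

/-- log-derivative in direction `j` -/
noncomputable def Ss (j : Fin N) (x : Fin N → ℝ) : ℝ :=
  ∑ ℓ ∈ univ.erase j, Cc j ℓ / (x j - x ℓ)

/-- derivative of `Ss j` in direction `j` -/
noncomputable def Tt (j : Fin N) (x : Fin N → ℝ) : ℝ :=
  ∑ ℓ ∈ univ.erase j, -(Cc j ℓ) / (x j - x ℓ) ^ 2

/-- full derivative of `Ww` -/
noncomputable def Ll (x : Fin N → ℝ) : (Fin N → ℝ) →L[ℝ] ℝ :=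
  ∑ j, ∑ k, if j < k then (Cc j k / (x k - x j)) • (pr k - pr j) else 0

/-- full derivative of `Ss j` -/
noncomputable def Mm (j : Fin N) (x : Fin N → ℝ) : (Fin N → ℝ) →L[ℝ] ℝ :=
  ∑ ℓ ∈ univ.erase j, (-(Cc j ℓ) / (x j - x ℓ) ^ 2) • (pr j - pr ℓ)

lemma isOpen_U : IsOpen {x : Fin N → ℝ | StrictMono x} := by
  have h : {x : Fin N → ℝ | StrictMono x}
      = ⋂ p : Fin N × Fin N, {x : Fin N → ℝ | p.1 < p.2 → x p.1 < x p.2} := by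
    ext x
    simp only [Set.mem_setOf_eq, Set.mem_iInter]
    exact ⟨fun hx p hp => hx hp, fun hx a b hab => hx (a, b) hab⟩
  rw [h]
  refine isOpen_iInter_of_finite fun p => ?_
  by_cases hp : p.1 < p.2
  · simp only [hp, forall_true_left]
    exact isOpen_lt (continuous_apply p.1) (continuous_apply p.2)
  · simp only [hp, false_implies, Set.setOf_true]
    exact isOpen_univ

lemma Ff_eq (x : Fin N → ℝ) (hx : StrictMono x) : Ff x = Real.exp (Ww x) := by
  unfold Ff Ww
  rw [Real.exp_sum]
  refine Finset.prod_congr rfl fun j _ => ?_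
  rw [Real.exp_sum]
  refine Finset.prod_congr rfl fun k _ => ?_
  by_cases h : j < k
  · simp only [h, if_true]
    rw [Real.rpow_def_of_pos (sub_pos.mpr (hx h)), mul_comm]
  · simp [h]

lemma hasFDerivAt_Ww (x : Fin N → ℝ) (hx : StrictMono x) : HasFDerivAt Ww (Ll x) x := by
  unfold Ww Ll
  refine HasFDerivAt.fun_sum fun j _ => HasFDerivAt.fun_sum fun k _ => ?_
  by_cases h : j < k
  · simp only [h, if_true]
    have h1 : HasFDerivAt (fun y : Fin N → ℝ => y k - y j) (pr k - pr j) x :=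
      ((pr k).hasFDerivAt).sub ((pr j).hasFDerivAt)
    have h2 := (h1.log (ne_of_gt (sub_pos.mpr (hx h)))).const_mul (Cc j k)
    refine h2.congr_fderiv ?_
    ext v
    simp only [ContinuousLinearMap.coe_smul', Pi.smul_apply, ContinuousLinearMap.coe_sub',
      Pi.sub_apply, pr_apply, smul_eq_mul]
    ring
  · simp only [h, if_false]
    exact hasFDerivAt_const 0 x

lemma Ll_apply (x : Fin N → ℝ) (m : Fin N) : Ll x (Pi.single m 1) = Ss m x := by
  classical
  have hrhs : Ss m x = ∑ ℓ : Fin N, Cc m ℓ / (x m - x ℓ) := by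
    unfold Ss
    rw [Finset.sum_erase_eq_sub (Finset.mem_univ m)]
    simp
  rw [hrhs]
  unfold Ll
  simp only [ContinuousLinearMap.sum_apply]
  have hterm : ∀ j k : Fin N,
      (if j < k then (Cc j k / (x k - x j)) • (pr k - pr j) else 0) (Pi.single m 1)
      = (if j < k ∧ k = m then Cc j k / (x k - x j) else 0)
        - (if j < k ∧ j = m then Cc j k / (x k - x j) else 0) := by
    intro j k
    by_cases h : j < k
    · simp only [h, if_true, true_and, ContinuousLinearMap.smul_apply,
        ContinuousLinearMap.sub_apply, pr_apply, smul_eq_mul, Pi.single_apply]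
      by_cases hk : k = m <;> by_cases hj : j = m <;> simp [hk, hj] <;> ring
    · simp [h]
  simp only [hterm]
  simp only [Finset.sum_sub_distrib]
  have h1 : ∑ j : Fin N, ∑ k : Fin N, (if j < k ∧ k = m then Cc j k / (x k - x j) else 0)
      = ∑ j : Fin N, (if j < m then Cc j m / (x m - x j) else 0) := by
    refine Finset.sum_congr rfl fun j _ => ?_
    rw [Finset.sum_eq_single m]
    · by_cases h : j < m <;> simp [h]
    · intro k _ hk; simp [hk]
    · intro hm; exact absurd (Finset.mem_univ m) hm
  have h2 : ∑ j : Fin N, ∑ k : Fin N, (if j < k ∧ j = m then Cc j k / (x k - x j) else 0)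
      = ∑ k : Fin N, (if m < k then Cc m k / (x k - x m) else 0) := by
    rw [Finset.sum_comm]
    refine Finset.sum_congr rfl fun k _ => ?_
    rw [Finset.sum_eq_single m]
    · by_cases h : m < k <;> simp [h]
    · intro j _ hj; simp [hj]
    · intro hm; exact absurd (Finset.mem_univ m) hm
  rw [h1, h2, ← Finset.sum_sub_distrib]
  refine Finset.sum_congr rfl fun ℓ _ => ?_
  rcases lt_trichotomy ℓ m with h | h | h
  · simp only [h, if_true, not_lt_of_gt h, if_false, sub_zero]
    rw [Cc_symm]
  · subst h
    simp [lt_irrefl, sub_self]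
  · simp only [h, if_true, not_lt_of_gt h, if_false, zero_sub]
    rw [show x m - x ℓ = -(x ℓ - x m) by ring, div_neg]

lemma hasFDerivAt_Ss (j : Fin N) (x : Fin N → ℝ) (hx : StrictMono x) :
    HasFDerivAt (Ss j) (Mm j x) x := by
  unfold Ss Mm
  refine HasFDerivAt.fun_sum fun ℓ hℓ => ?_
  have hne : x j - x ℓ ≠ 0 :=
    sub_ne_zero.mpr fun h => (Finset.ne_of_mem_erase hℓ) (hx.injective h.symm)
  have h1 : HasFDerivAt (fun y : Fin N → ℝ => y j - y ℓ) (pr j - pr ℓ) x :=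
    ((pr j).hasFDerivAt).sub ((pr ℓ).hasFDerivAt)
  have h2 : HasDerivAt (fun t : ℝ => Cc j ℓ / t) (-(Cc j ℓ) / (x j - x ℓ) ^ 2) (x j - x ℓ) := by
    simp only [div_eq_mul_inv]
    refine (HasDerivAt.const_mul (Cc j ℓ) (hasDerivAt_inv hne)).congr_deriv ?_
    ring
  have h3 := h2.comp_hasFDerivAt x h1
  exact h3

lemma Mm_apply (j : Fin N) (x : Fin N → ℝ) : Mm j x (Pi.single j 1) = Tt j x := by
  unfold Mm Tt
  rw [ContinuousLinearMap.sum_apply]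
  refine Finset.sum_congr rfl fun ℓ hℓ => ?_
  have hne : ℓ ≠ j := Finset.ne_of_mem_erase hℓ
  simp [Pi.single_apply, hne]

lemma hasFDerivAt_Ff (x : Fin N → ℝ) (hx : StrictMono x) :
    HasFDerivAt Ff (Ff x • Ll x) x := by
  have hexp := (hasFDerivAt_Ww x hx).exp
  have hev : Ff =ᶠ[nhds x] fun y => Real.exp (Ww y) := by
    filter_upwards [isOpen_U.mem_nhds hx] with y hy using Ff_eq y hy
  have h := hexp.congr_of_eventuallyEq hev
  rwa [← Ff_eq x hx] at h

lemma fderiv_Ff_apply (x : Fin N → ℝ) (hx : StrictMono x) (m : Fin N) :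
    fderiv ℝ Ff x (Pi.single m 1) = Ff x * Ss m x := by
  rw [(hasFDerivAt_Ff x hx).fderiv]
  simp [Ll_apply]

lemma second (x : Fin N → ℝ) (hx : StrictMono x) (j : Fin N) :
    fderiv ℝ (fun y => fderiv ℝ Ff y (Pi.single j 1)) x (Pi.single j 1)
      = Ff x * Tt j x + Ff x * (Ss j x * Ss j x) := by
  have hev : (fun y => fderiv ℝ Ff y (Pi.single j 1)) =ᶠ[nhds x]
      fun y => Ff y * Ss j y := by
    filter_upwards [isOpen_U.mem_nhds hx] with y hy
    rw [(hasFDerivAt_Ff y hy).fderiv]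
    simp [Ll_apply]
  rw [hev.fderiv_eq]
  have hmul := (hasFDerivAt_Ff x hx).mul (hasFDerivAt_Ss j x hx)
  rw [show (fun y => Ff y * Ss j y) = Ff * Ss j from rfl, hmul.fderiv]
  simp only [ContinuousLinearMap.add_apply, ContinuousLinearMap.smul_apply, Mm_apply,
    Ll_apply, smul_eq_mul]
  ring

lemma contDiffOn_Ff : ContDiffOn ℝ (⊤ : ℕ∞) (Ff (N := N)) {x : Fin N → ℝ | StrictMono x} := by
  have hW : ContDiffOn ℝ (⊤ : ℕ∞) (Ww (N := N)) {x : Fin N → ℝ | StrictMono x} := by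
    unfold Ww
    refine ContDiffOn.sum fun j _ => ContDiffOn.sum fun k _ => ?_
    by_cases h : j < k
    · simp only [h, if_true]
      have hsub : ContDiff ℝ (⊤ : ℕ∞) fun y : Fin N → ℝ => y k - y j :=
        ((pr k).contDiff).sub ((pr j).contDiff)
      exact contDiffOn_const.mul
        (hsub.contDiffOn.log fun y hy => ne_of_gt (sub_pos.mpr (hy h)))
    · simp only [h, if_false]
      exact contDiffOn_const
  exact ContDiffOn.congr (Real.contDiff_exp.comp_contDiffOn hW)
    fun y hy => Ff_eq y hy

/-- the off-diagonal terms -/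
noncomputable def Gg (x : Fin N → ℝ) (j ℓ m : Fin N) : ℝ :=
  2 * (Cc j ℓ / (x j - x ℓ) * (Cc j m / (x j - x m)))
    + 2 / (x ℓ - x j) * (Cc ℓ m / (x ℓ - x m))

lemma key (x : Fin N → ℝ) (hx : StrictMono x) (j : Fin N) :
    2 * (Ss j x * Ss j x + Tt j x)
      + ∑ ℓ ∈ univ.erase j,
          (2 / (x ℓ - x j) * Ss ℓ x - 1 / 2 / (x ℓ - x j) ^ 2) = 0 := by
  classical
  have hd : ∀ a b : Fin N, a ≠ b → x a - x b ≠ 0 := fun a b h =>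
    sub_ne_zero.mpr fun he => h (hx.injective he)
  have e1 : Ss j x * Ss j x
      = ∑ ℓ ∈ univ.erase j, (Cc j ℓ / (x j - x ℓ) * (Cc j ℓ / (x j - x ℓ))
          + ∑ m ∈ (univ.erase j).erase ℓ, Cc j ℓ / (x j - x ℓ) * (Cc j m / (x j - x m))) := by
    unfold Ss
    rw [Finset.sum_mul_sum]
    exact Finset.sum_congr rfl fun ℓ hℓ => (Finset.add_sum_erase _ _ hℓ).symm
  have e2 : ∀ ℓ ∈ univ.erase j, Ss ℓ x
      = Cc ℓ j / (x ℓ - x j) + ∑ m ∈ (univ.erase j).erase ℓ, Cc ℓ m / (x ℓ - x m) := by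
    intro ℓ hℓ
    have hj : j ∈ univ.erase ℓ :=
      Finset.mem_erase.mpr ⟨(Finset.ne_of_mem_erase hℓ).symm, Finset.mem_univ j⟩
    unfold Ss
    rw [← Finset.add_sum_erase _ _ hj, Finset.erase_right_comm]
  have e3 : ∑ ℓ ∈ univ.erase j, (2 / (x ℓ - x j) * Ss ℓ x - 1 / 2 / (x ℓ - x j) ^ 2)
      = ∑ ℓ ∈ univ.erase j,
          ((2 / (x ℓ - x j) * (Cc ℓ j / (x ℓ - x j)) - 1 / 2 / (x ℓ - x j) ^ 2)
            + ∑ m ∈ (univ.erase j).erase ℓ, 2 / (x ℓ - x j) * (Cc ℓ m / (x ℓ - x m))) := by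
    refine Finset.sum_congr rfl fun ℓ hℓ => ?_
    rw [e2 ℓ hℓ, mul_add, Finset.mul_sum]
    ring
  rw [e1, e3]
  unfold Tt
  rw [mul_add, Finset.mul_sum, Finset.mul_sum, ← Finset.sum_add_distrib,
    ← Finset.sum_add_distrib]
  have e4 : ∀ ℓ ∈ univ.erase j,
      (2 * (Cc j ℓ / (x j - x ℓ) * (Cc j ℓ / (x j - x ℓ))
          + ∑ m ∈ (univ.erase j).erase ℓ, Cc j ℓ / (x j - x ℓ) * (Cc j m / (x j - x m)))
        + 2 * (-(Cc j ℓ) / (x j - x ℓ) ^ 2)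
        + ((2 / (x ℓ - x j) * (Cc ℓ j / (x ℓ - x j)) - 1 / 2 / (x ℓ - x j) ^ 2)
            + ∑ m ∈ (univ.erase j).erase ℓ, 2 / (x ℓ - x j) * (Cc ℓ m / (x ℓ - x m))))
      = ∑ m ∈ (univ.erase j).erase ℓ, Gg x j ℓ m := by
    intro ℓ hℓ
    have hℓj : ℓ ≠ j := Finset.ne_of_mem_erase hℓ
    have h1 : x j - x ℓ ≠ 0 := hd _ _ hℓj.symm
    have h2 : x ℓ - x j ≠ 0 := hd _ _ hℓj
    have hsq := Cc_sq j ℓ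
    have hP : 2 * (Cc j ℓ / (x j - x ℓ) * (Cc j ℓ / (x j - x ℓ)))
        + 2 * (-(Cc j ℓ) / (x j - x ℓ) ^ 2)
        + (2 / (x ℓ - x j) * (Cc ℓ j / (x ℓ - x j)) - 1 / 2 / (x ℓ - x j) ^ 2) = 0 := by
      rw [show Cc ℓ j = Cc j ℓ from Cc_symm j ℓ, show x ℓ - x j = -(x j - x ℓ) by ring]
      field_simp
      linear_combination 4 * hsq
    have hcomb : ∀ m : Fin N,
        2 * (Cc j ℓ / (x j - x ℓ) * (Cc j m / (x j - x m)))
          + 2 / (x ℓ - x j) * (Cc ℓ m / (x ℓ - x m)) = Gg x j ℓ m := fun m => rfl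
    calc
      _ = (2 * (Cc j ℓ / (x j - x ℓ) * (Cc j ℓ / (x j - x ℓ)))
            + 2 * (-(Cc j ℓ) / (x j - x ℓ) ^ 2)
            + (2 / (x ℓ - x j) * (Cc ℓ j / (x ℓ - x j)) - 1 / 2 / (x ℓ - x j) ^ 2))
          + ((∑ m ∈ (univ.erase j).erase ℓ, 2 * (Cc j ℓ / (x j - x ℓ) * (Cc j m / (x j - x m))))
            + ∑ m ∈ (univ.erase j).erase ℓ, 2 / (x ℓ - x j) * (Cc ℓ m / (x ℓ - x m))) := by
        rw [mul_add, Finset.mul_sum]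
        ring
      _ = ∑ m ∈ (univ.erase j).erase ℓ, Gg x j ℓ m := by
        rw [hP, zero_add, ← Finset.sum_add_distrib]
        exact Finset.sum_congr rfl fun m _ => hcomb m
  rw [Finset.sum_congr rfl e4]
  -- it remains to show that the antisymmetric double sum vanishes
  have hanti : ∀ ℓ ∈ univ.erase j, ∀ m ∈ (univ.erase j).erase ℓ,
      Gg x j ℓ m + Gg x j m ℓ = 0 := by
    intro ℓ hℓ m hm
    have hℓj : ℓ ≠ j := Finset.ne_of_mem_erase hℓ
    have hmℓ : m ≠ ℓ := Finset.ne_of_mem_erase hm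
    have hmj : m ≠ j := Finset.ne_of_mem_erase (Finset.mem_of_mem_erase hm)
    have d1 := hd j ℓ hℓj.symm
    have d2 := hd j m hmj.symm
    have d3 := hd ℓ j hℓj
    have d4 := hd ℓ m (Ne.symm hmℓ)
    have d5 := hd m j hmj
    have d6 := hd m ℓ hmℓ
    unfold Gg
    rw [show Cc m ℓ = Cc ℓ m from Cc_symm ℓ m,
      show Cc j ℓ / (x j - x ℓ) * (Cc j m / (x j - x m))
          = Cc ℓ m / 2 / ((x j - x ℓ) * (x j - x m)) from by
        rw [div_mul_div_comm, Cc_mul],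
      show Cc j m / (x j - x m) * (Cc j ℓ / (x j - x ℓ))
          = Cc ℓ m / 2 / ((x j - x m) * (x j - x ℓ)) from by
        rw [div_mul_div_comm, mul_comm (Cc j m) (Cc j ℓ), Cc_mul]]
    field_simp
    ring
  have hswap : ∑ ℓ ∈ univ.erase j, ∑ m ∈ (univ.erase j).erase ℓ, Gg x j ℓ m
      = ∑ ℓ ∈ univ.erase j, ∑ m ∈ (univ.erase j).erase ℓ, Gg x j m ℓ := by
    rw [Finset.sum_comm' (t' := univ.erase j) (s' := fun m => (univ.erase j).erase m)]
    intro a b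
    simp only [Finset.mem_erase, Finset.mem_univ, and_true]
    constructor
    · rintro ⟨h1, h2, h3⟩; exact ⟨⟨Ne.symm h2, h1⟩, h3⟩
    · rintro ⟨⟨h1, h2⟩, h3⟩; exact ⟨h2, Ne.symm h1, h3⟩
  have hzero : (∑ ℓ ∈ univ.erase j, ∑ m ∈ (univ.erase j).erase ℓ, Gg x j ℓ m)
      + ∑ ℓ ∈ univ.erase j, ∑ m ∈ (univ.erase j).erase ℓ, Gg x j m ℓ = 0 := by
    rw [← Finset.sum_add_distrib]
    refine Finset.sum_eq_zero fun ℓ hℓ => ?_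
    rw [← Finset.sum_add_distrib]
    exact Finset.sum_eq_zero fun m hm => hanti ℓ hℓ m hm
  linarith [hswap, hzero]

end GFFAux

/-- The GFF partition function
`Z_GFF(x) = ∏_{j<k} (x_k - x_j)^((-1)^(j-k)/2)` is smooth on `X_{2n}` and
satisfies the BPZ equations with `κ = 4`, `b = 1/4`.
(Here `(-1)^(j-k) = (-1)^(j+k)`.) -/
theorem stmt_1 (n : ℕ) (hn : 1 ≤ n)
    (Xp : Set (Fin (2 * n) → ℝ)) (hXp : Xp = {x : Fin (2 * n) → ℝ | StrictMono x})
    (Z : (Fin (2 * n) → ℝ) → ℝ)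
    (hZ : ∀ x : Fin (2 * n) → ℝ, Z x = ∏ j : Fin (2 * n), ∏ k : Fin (2 * n),
        if j < k then (x k - x j) ^ ((-1 : ℝ) ^ ((j : ℕ) + (k : ℕ)) / 2) else 1) :
    ContDiffOn ℝ (⊤ : ℕ∞) Z Xp ∧
    ∀ x ∈ Xp, ∀ j : Fin (2 * n),
      2 * fderiv ℝ (fun y => fderiv ℝ Z y (Pi.single j 1)) x (Pi.single j 1)
        + ∑ ℓ ∈ univ.erase j,
            (2 / (x ℓ - x j) * fderiv ℝ Z x (Pi.single ℓ 1)
              - (1 / 2) / (x ℓ - x j) ^ 2 * Z x) = 0 := by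
  have hZF : Z = GFFAux.Ff := funext fun x => by rw [hZ]; rfl
  subst hXp
  constructor
  · rw [hZF]; exact GFFAux.contDiffOn_Ff
  · intro x hx j
    have hx' : StrictMono x := hx
    rw [hZF]
    rw [GFFAux.second x hx' j]
    have h1 : ∑ ℓ ∈ univ.erase j,
        (2 / (x ℓ - x j) * fderiv ℝ GFFAux.Ff x (Pi.single ℓ 1)
          - 1 / 2 / (x ℓ - x j) ^ 2 * GFFAux.Ff x)
        = GFFAux.Ff x * ∑ ℓ ∈ univ.erase j,
            (2 / (x ℓ - x j) * GFFAux.Ss ℓ x - 1 / 2 / (x ℓ - x j) ^ 2) := by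
      rw [Finset.mul_sum]
      refine Finset.sum_congr rfl fun ℓ hℓ => ?_
      rw [GFFAux.fderiv_Ff_apply x hx' ℓ]
      ring
    rw [h1]
    have hk := GFFAux.key x hx' j
    linear_combination GFFAux.Ff x * hk
end

section
/- Fix κ ∈ (0, 4] and an integer n ≥ 1, and let α be a perfect pairing of {1, …, 2n}. Then the integral ∫_{X_{2n}} ∏_{1 ≤ j < k ≤ 2n} (x_k − x_j)^{6/κ} · ∏_{{a,b} ∈ α, a < b} (x_b − x_a)^{−(6−κ)/κ} · e^{−|x|²/2} dx is finite. (Combined with the power-law bound 0 < Z_α(x) ≤ ∏_{{a,b}∈α}|x_b − x_a|^{−(6−κ)/κ} on pure partition functions, this yields the finiteness of the normalization constant J_α = ∫_{X_{2n}} f_{8/κ}(x) G_α(x)^{−1} e^{−|x|²/2} dx of Lemma 3.2 of the paper.) -/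
open Real MeasureTheory Finset ENNReal

/-- For `κ ∈ (0,4]`, `n ≥ 1` and a perfect pairing `α` of
`{1,…,2n}` (encoded as a fixed-point-free involution `σ`, the pairs being
`{a, σ a}`), the integral
`∫_{X_{2n}} ∏_{j<k}(x_k - x_j)^(6/κ) ∏_{{a,b}∈α, a<b}(x_b - x_a)^(-(6-κ)/κ)
  e^{-|x|²/2} dx` is finite. -/
theorem stmt_5 (κ : ℝ) (hκ0 : 0 < κ) (hκ4 : κ ≤ 4) (n : ℕ) (hn : 1 ≤ n)
    (σ : Fin (2 * n) → Fin (2 * n)) (hσ : σ ∘ σ = id) (hσ' : ∀ a, σ a ≠ a)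
    (Xp : Set (Fin (2 * n) → ℝ)) (hXp : Xp = {x : Fin (2 * n) → ℝ | StrictMono x}) :
    (∫⁻ x in Xp, ENNReal.ofReal
        ((∏ j : Fin (2 * n), ∏ k : Fin (2 * n),
            if j < k then (x k - x j) ^ (6 / κ) else 1)
          * (∏ a ∈ univ.filter (fun a => a < σ a),
              (x (σ a) - x a) ^ (-(6 - κ) / κ))
          * Real.exp (-(∑ i : Fin (2 * n), x i ^ 2) / 2))) < ⊤ := by
  set p : ℝ := 6 / κ with hp
  have hp1 : 1 ≤ p := by
    rw [hp, le_div_iff₀ hκ0]; linarith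
  have hp0 : 0 ≤ p := by linarith
  set c : ℝ := 2 * (2 * n) * p with hc
  have hc0 : 0 ≤ c := by positivity
  set G : ℝ → ℝ := fun t => Real.exp (c * |t| - t ^ 2 / 2) with hG
  have hGcont : Continuous G := by
    apply Real.continuous_exp.comp
    continuity
  have hGint : Integrable G := by
    have h1 : Integrable (fun t : ℝ => Real.exp (c ^ 2) * Real.exp (-(4⁻¹ : ℝ) * t ^ 2)) :=
      (integrable_exp_neg_mul_sq (by norm_num)).const_mul _
    refine h1.mono' hGcont.aestronglyMeasurable ?_
    filter_upwards with t
    rw [Real.norm_eq_abs, abs_of_pos (Real.exp_pos _), ← Real.exp_add]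
    apply Real.exp_le_exp.2
    nlinarith [sq_nonneg (c - |t| / 2), sq_abs t, abs_nonneg t]
  -- pointwise bound on Xp
  have key : ∀ x ∈ Xp,
      ((∏ j : Fin (2 * n), ∏ k : Fin (2 * n), if j < k then (x k - x j) ^ (6 / κ) else 1)
          * (∏ a ∈ univ.filter (fun a => a < σ a), (x (σ a) - x a) ^ (-(6 - κ) / κ))
          * Real.exp (-(∑ i : Fin (2 * n), x i ^ 2) / 2)) ≤ ∏ i : Fin (2 * n), G (x i) := by
    intro x hxmem
    rw [hXp] at hxmem
    have hx : StrictMono x := hxmem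
    set q : ℝ := -(6 - κ) / κ with hq
    -- rewrite the pairing product as a double product
    have hB : (∏ a ∈ univ.filter (fun a => a < σ a), (x (σ a) - x a) ^ q)
        = ∏ j : Fin (2 * n), ∏ k : Fin (2 * n),
            (if σ j = k then (if j < σ j then (x (σ j) - x j) ^ q else 1) else 1) := by
      rw [Finset.prod_filter]
      refine Finset.prod_congr rfl fun j _ => ?_
      rw [Finset.prod_ite_eq]
      simp
    have hAB : (∏ j : Fin (2 * n), ∏ k : Fin (2 * n), if j < k then (x k - x j) ^ (6 / κ) else 1)
          * (∏ a ∈ univ.filter (fun a => a < σ a), (x (σ a) - x a) ^ q)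
        = ∏ j : Fin (2 * n), ∏ k : Fin (2 * n),
            ((if j < k then (x k - x j) ^ p else 1)
              * (if σ j = k then (if j < σ j then (x (σ j) - x j) ^ q else 1) else 1)) := by
      rw [hB, ← Finset.prod_mul_distrib]
      exact Finset.prod_congr rfl fun j _ => (Finset.prod_mul_distrib).symm
    -- bound each combined factor
    have hfac : ∀ j k : Fin (2 * n),
        ((if j < k then (x k - x j) ^ p else 1)
          * (if σ j = k then (if j < σ j then (x (σ j) - x j) ^ q else 1) else 1))
        ≤ Real.exp (p * (|x j| + |x k|)) := by
      intro j k
      set s : ℝ := |x j| + |x k| with hs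
      have hs0 : 0 ≤ s := by positivity
      have hps : s ≤ p * s := le_mul_of_one_le_left hs0 hp1
      have hexp : p * s + 1 ≤ Real.exp (p * s) := Real.add_one_le_exp _
      by_cases hjk : j < k
      · have hd : 0 < x k - x j := sub_pos.2 (hx hjk)
        have hds : x k - x j ≤ s := by
          rw [hs]
          have := abs_sub_abs_le_abs_sub (x k) (x j)
          have h2 := le_abs_self (x k - x j)
          have h3 := abs_sub (x k) (x j)
          calc x k - x j ≤ |x k - x j| := le_abs_self _
            _ ≤ |x k| + |x j| := abs_sub _ _
            _ = |x j| + |x k| := add_comm _ _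
        by_cases hsk : σ j = k
        · have hjs : j < σ j := hsk ▸ hjk
          rw [if_pos hjk, if_pos hsk, if_pos hjs, hsk, ← Real.rpow_add hd]
          have hpq : p + q = 1 := by
            rw [hp, hq]; field_simp; ring
          rw [hpq, Real.rpow_one]
          calc x k - x j ≤ s := hds
            _ ≤ Real.exp (p * s) := by linarith
        · rw [if_pos hjk, if_neg hsk, mul_one]
          have h1 : (x k - x j) ^ p ≤ s ^ p := Real.rpow_le_rpow hd.le hds hp0
          have h2 : s ≤ Real.exp s := by
            have := Real.add_one_le_exp s; linarith
          have h3 : s ^ p ≤ (Real.exp s) ^ p := Real.rpow_le_rpow hs0 h2 hp0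
          have h4 : (Real.exp s) ^ p = Real.exp (p * s) := by
            rw [Real.rpow_def_of_pos (Real.exp_pos s), Real.log_exp, mul_comm]
          linarith [h1, h3, h4 ▸ h3]
      · rw [if_neg hjk, one_mul]
        have h1 : (1 : ℝ) ≤ Real.exp (p * s) := Real.one_le_exp (by positivity)
        split_ifs with h2 h3
        · exact absurd (h2 ▸ h3) hjk
        · exact h1
        · exact h1
    have hfac0 : ∀ j k : Fin (2 * n),
        0 ≤ ((if j < k then (x k - x j) ^ p else 1)
          * (if σ j = k then (if j < σ j then (x (σ j) - x j) ^ q else 1) else 1)) := by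
      intro j k
      apply mul_nonneg
      · split_ifs with h
        · exact Real.rpow_nonneg (sub_pos.2 (hx h)).le _
        · exact zero_le_one
      · split_ifs with h1 h2
        · exact Real.rpow_nonneg (sub_pos.2 (hx h2)).le _
        · exact zero_le_one
        · exact zero_le_one
    have hABle : (∏ j : Fin (2 * n), ∏ k : Fin (2 * n), if j < k then (x k - x j) ^ (6 / κ) else 1)
          * (∏ a ∈ univ.filter (fun a => a < σ a), (x (σ a) - x a) ^ q)
        ≤ Real.exp (c * ∑ i : Fin (2 * n), |x i|) := by
      rw [hAB]
      have step1 : (∏ j : Fin (2 * n), ∏ k : Fin (2 * n),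
            ((if j < k then (x k - x j) ^ p else 1)
              * (if σ j = k then (if j < σ j then (x (σ j) - x j) ^ q else 1) else 1)))
          ≤ ∏ j : Fin (2 * n), ∏ k : Fin (2 * n), Real.exp (p * (|x j| + |x k|)) := by
        refine Finset.prod_le_prod (fun j _ => Finset.prod_nonneg fun k _ => hfac0 j k)
          (fun j _ => Finset.prod_le_prod (fun k _ => hfac0 j k) (fun k _ => hfac j k))
      refine step1.trans (le_of_eq ?_)
      simp_rw [← Real.exp_sum]
      congr 1
      rw [hc]
      simp only [mul_add, Finset.sum_add_distrib, Finset.sum_const, Finset.card_univ,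
        Fintype.card_fin, nsmul_eq_mul, ← Finset.mul_sum]
      push_cast
      ring
    calc ((∏ j : Fin (2 * n), ∏ k : Fin (2 * n), if j < k then (x k - x j) ^ (6 / κ) else 1)
          * (∏ a ∈ univ.filter (fun a => a < σ a), (x (σ a) - x a) ^ q))
          * Real.exp (-(∑ i : Fin (2 * n), x i ^ 2) / 2)
        ≤ Real.exp (c * ∑ i : Fin (2 * n), |x i|)
            * Real.exp (-(∑ i : Fin (2 * n), x i ^ 2) / 2) :=
          mul_le_mul_of_nonneg_right hABle (Real.exp_pos _).le
      _ = ∏ i : Fin (2 * n), G (x i) := by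
          rw [hG, ← Real.exp_add, ← Real.exp_sum]
          congr 1
          rw [Finset.sum_sub_distrib, ← Finset.mul_sum, ← Finset.sum_div]
          ring
  -- conclude
  have hGprodcont : Continuous fun x : Fin (2 * n) → ℝ => ∏ i : Fin (2 * n), G (x i) :=
    continuous_finset_prod _ fun i _ => hGcont.comp (continuous_apply i)
  have hGm : Measurable fun x : Fin (2 * n) → ℝ => ENNReal.ofReal (∏ i : Fin (2 * n), G (x i)) :=
    ENNReal.measurable_ofReal.comp hGprodcont.measurable
  refine lt_of_le_of_lt (setLIntegral_mono hGm fun x hx => ENNReal.ofReal_le_ofReal (key x hx)) ?_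
  refine lt_of_le_of_lt (setLIntegral_le_lintegral _ _) ?_
  exact (Integrable.fintype_prod (f := fun _ : Fin (2 * n) => G) fun _ => hGint).lintegral_lt_top
end
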